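/- arXiv:1206.1105 — 2 statements merged into one kernel-verified Lean document; each statement's English description precedes it below -/
import Mathlib

section
/- Corollary 1 (single-node upper bound): for every node i and every nonempty subset T ⊆ {1,…,n}, the influence from the singleton {i} to T satisfies f_{{i}→T} ≤ (1 + λ_i) · p_{i→T}, where p_{i→T} = Σ_{j∈T} p_{ji} and P = Γ⁻¹ = (p_{ij}). -/
open Matrix BigOperators

/-- Minimum principle: under the column-substochastic hypotheses, any vector `g`
satisfying `∑ k, T k j * g k ≤ (1 + lam j) * g j` at every index where `g j < 0`
must be nonnegative. -/
lemma aux_nonneg (n : ℕ) (T : Matrix (Fin n) (Fin n) ℝ)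
    (hT : ∀ i j, 0 ≤ T i j)
    (hcol : ∀ i, ∑ j, T j i ≤ 1)
    (lam : Fin n → ℝ) (hlam : ∀ i, 0 < lam i)
    (g : Fin n → ℝ)
    (h : ∀ j, g j < 0 → ∑ k, T k j * g k ≤ (1 + lam j) * g j) :
    ∀ j, 0 ≤ g j := by
  by_contra hc
  push_neg at hc
  obtain ⟨j0, hj0⟩ := hc
  obtain ⟨m, _, hmin⟩ := Finset.exists_min_image Finset.univ g ⟨j0, Finset.mem_univ j0⟩
  have hgm : g m < 0 := lt_of_le_of_lt (hmin j0 (Finset.mem_univ j0)) hj0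
  have h1 : g m * (∑ k, T k m) ≤ ∑ k, T k m * g k := by
    rw [Finset.mul_sum]
    apply Finset.sum_le_sum
    intro k _
    rw [mul_comm]
    exact mul_le_mul_of_nonneg_left (hmin k (Finset.mem_univ k)) (hT k m)
  have h2 : g m ≤ g m * (∑ k, T k m) := by
    nlinarith [hcol m]
  have h3 := h m hgm
  nlinarith [hlam m]

/-- Corollary 1, single-node upper bound: if `f` is the influence vector of
the singleton `{i}`, then for every nonempty target set `𝒯`,
`f_{{i}→𝒯} = ∑_{j∈𝒯} f_j ≤ (1 + λ_i) · p_{i→𝒯}`, where `p_{i→𝒯} = ∑_{j∈𝒯} p_{ji}`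
and `P = Γ⁻¹`. -/
theorem single_node_influence_upper_bound (n : ℕ) (hn : 1 ≤ n)
    (T : Matrix (Fin n) (Fin n) ℝ)
    (hT : ∀ i j, 0 ≤ T i j)
    (hcol : ∀ i, ∑ j, T j i ≤ 1)
    (lam : Fin n → ℝ) (hlam : ∀ i, 0 < lam i)
    (i : Fin n) (Tset : Finset (Fin n)) (hTset : Tset.Nonempty)
    (f : Fin n → ℝ)
    (hf1 : f i = 1)
    (hf2 : ∀ j, j ≠ i → (1 + lam j) * f j = ∑ k, T k j * f k) :
    ∑ j ∈ Tset, f j ≤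
      (1 + lam i) * ∑ j ∈ Tset, (1 + Matrix.diagonal lam - Tᵀ)⁻¹ j i := by
  set Γ : Matrix (Fin n) (Fin n) ℝ := 1 + Matrix.diagonal lam - Tᵀ with hΓ
  -- explicit formula for Γ.mulVec
  have hmv : ∀ g : Fin n → ℝ, ∀ j, Γ.mulVec g j = (1 + lam j) * g j - ∑ k, T k j * g k := by
    intro g j
    simp only [hΓ, Matrix.mulVec, dotProduct, Matrix.sub_apply, Matrix.add_apply,
      Matrix.one_apply, Matrix.diagonal_apply, Matrix.transpose_apply,
      sub_mul, add_mul, ite_mul, one_mul, zero_mul,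
      Finset.sum_sub_distrib, Finset.sum_add_distrib,
      Finset.sum_ite_eq, Finset.mem_univ, if_true]
  -- Γ is invertible
  have hdet : IsUnit Γ.det := by
    rw [isUnit_iff_ne_zero]
    intro h0
    rw [← Matrix.exists_mulVec_eq_zero_iff] at h0
    obtain ⟨v, hv0, hv⟩ := h0
    apply hv0
    have he : ∀ j, (1 + lam j) * v j - ∑ k, T k j * v k = 0 := by
      intro j
      rw [← hmv v j, hv]
      simp
    have h1 : ∀ j, 0 ≤ v j :=
      aux_nonneg n T hT hcol lam hlam v (fun j _ => by linarith [he j])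
    have h2 : ∀ j, 0 ≤ -v j := by
      apply aux_nonneg n T hT hcol lam hlam (fun k => -v k)
      intro j _
      have : ∑ k, T k j * -v k = -∑ k, T k j * v k := by
        rw [← Finset.sum_neg_distrib]
        exact Finset.sum_congr rfl (fun k _ => by ring)
      rw [this]
      have := he j
      nlinarith
    funext j
    have := h1 j
    have := h2 j
    simp only [Pi.zero_apply]
    linarith
  set P : Matrix (Fin n) (Fin n) ℝ := Γ⁻¹ with hP
  have hΓP : Γ * P = 1 := Matrix.mul_nonsing_inv Γ hdet
  have hPΓ : P * Γ = 1 := Matrix.nonsing_inv_mul Γ hdet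
  -- the i-th column of P
  set g : Fin n → ℝ := fun j => P j i with hg
  have hΓg : ∀ j, Γ.mulVec g j = if j = i then 1 else 0 := by
    intro j
    have : Γ.mulVec g j = (Γ * P) j i := by
      simp [Matrix.mulVec, Matrix.mul_apply, dotProduct, hg]
    rw [this, hΓP, Matrix.one_apply]
  -- column is nonnegative
  have hgnn : ∀ j, 0 ≤ g j := by
    apply aux_nonneg n T hT hcol lam hlam
    intro j _
    have h1 := hΓg j
    rw [hmv] at h1
    by_cases hji : j = i
    · subst hji; rw [if_pos rfl] at h1; linarith
    · rw [if_neg hji] at h1; linarith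
  -- f is nonnegative
  have hfnn : ∀ j, 0 ≤ f j := by
    apply aux_nonneg n T hT hcol lam hlam
    intro j hj
    have hji : j ≠ i := by
      intro h; rw [h, hf1] at hj; linarith
    linarith [hf2 j hji]
  -- the constant c
  set c : ℝ := (1 + lam i) * f i - ∑ k, T k i * f k with hc
  have hΓf : ∀ j, Γ.mulVec f j = if j = i then c else 0 := by
    intro j
    rw [hmv]
    by_cases hji : j = i
    · simp [hji, hc]
    · simp [hji]
      linarith [hf2 j hji]
  -- f j = c * g j
  have hfg : ∀ j, f j = c * g j := by
    intro j
    have h1 : P.mulVec (Γ.mulVec f) = f := by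
      rw [Matrix.mulVec_mulVec, hPΓ, Matrix.one_mulVec]
    have h2 : P.mulVec (Γ.mulVec f) j = c * g j := by
      have heq : Γ.mulVec f = fun k => if k = i then c else 0 := funext hΓf
      rw [heq]
      simp only [Matrix.mulVec, dotProduct, mul_ite, mul_zero,
        Finset.sum_ite_eq', Finset.mem_univ, if_true]
      rw [hg]; ring
    rw [← h1, h2]
  -- c ≤ 1 + lam i
  have hcle : c ≤ 1 + lam i := by
    have : 0 ≤ ∑ k, T k i * f k :=
      Finset.sum_nonneg fun k _ => mul_nonneg (hT k i) (hfnn k)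
    rw [hc, hf1]
    linarith
  -- conclude
  calc ∑ j ∈ Tset, f j = c * ∑ j ∈ Tset, g j := by
        rw [Finset.mul_sum]
        exact Finset.sum_congr rfl fun j _ => hfg j
    _ ≤ (1 + lam i) * ∑ j ∈ Tset, g j := by
        apply mul_le_mul_of_nonneg_right hcle
        exact Finset.sum_nonneg fun j _ => hgnn j
    _ = (1 + lam i) * ∑ j ∈ Tset, (1 + Matrix.diagonal lam - Tᵀ)⁻¹ j i := rfl
end

section
/- If p_1,…,p_n ∈ [0,1] and O_1(p) = Σ_i p_i ≤ 1, then for every k ≥ 1 one has O_k(p) ≥ 2 · O_{k+1}(p), and the inequality is strict whenever O_{k+1}(p) > 0. -/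
open BigOperators

/-- The `k`-th elementary symmetric polynomial `O_k(p)` of `p₁,…,pₙ`. -/
def esymmO (n k : ℕ) (p : Fin n → ℝ) : ℝ :=
  ∑ s ∈ Finset.powersetCard k (Finset.univ : Finset (Fin n)), ∏ i ∈ s, p i

lemma esymmO_key (n k : ℕ) (p : Fin n → ℝ) :
    ∑ s ∈ Finset.powersetCard k (Finset.univ : Finset (Fin n)),
      ((∏ i ∈ s, p i) * ∑ j ∈ sᶜ, p j)
    = (k + 1 : ℝ) * esymmO n (k + 1) p := by
  calc ∑ s ∈ Finset.powersetCard k (Finset.univ : Finset (Fin n)),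
      ((∏ i ∈ s, p i) * ∑ j ∈ sᶜ, p j)
      = ∑ s ∈ Finset.powersetCard k (Finset.univ : Finset (Fin n)),
          ∑ j ∈ sᶜ, (∏ i ∈ s, p i) * p j :=
        Finset.sum_congr rfl (fun s _ => Finset.mul_sum sᶜ (fun j => p j) (∏ i ∈ s, p i))
    _ = ∑ x ∈ (Finset.powersetCard k (Finset.univ : Finset (Fin n))).sigma (fun s => sᶜ),
          (∏ i ∈ x.1, p i) * p x.2 :=
        Finset.sum_sigma' _ _ _
    _ = ∑ x ∈ (Finset.powersetCard (k + 1) (Finset.univ : Finset (Fin n))).sigma (fun t => t),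
          ∏ i ∈ x.1, p i := ?_
    _ = ∑ t ∈ Finset.powersetCard (k + 1) (Finset.univ : Finset (Fin n)),
          ∑ _j ∈ t, ∏ i ∈ t, p i :=
        Finset.sum_sigma _ _ _
    _ = ∑ t ∈ Finset.powersetCard (k + 1) (Finset.univ : Finset (Fin n)),
          (k + 1 : ℝ) * ∏ i ∈ t, p i :=
        Finset.sum_congr rfl (fun t ht => by
          rw [Finset.sum_const, (Finset.mem_powersetCard.mp ht).2, nsmul_eq_mul]
          push_cast; ring)
    _ = (k + 1 : ℝ) * esymmO n (k + 1) p := by rw [esymmO, Finset.mul_sum]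
  apply Finset.sum_nbij' (i := fun x => (⟨insert x.2 x.1, x.2⟩ : Σ _ : Finset (Fin n), Fin n))
    (j := fun x => (⟨x.1.erase x.2, x.2⟩ : Σ _ : Finset (Fin n), Fin n))
  · rintro ⟨s, j⟩ h
    rw [Finset.mem_sigma] at h ⊢
    obtain ⟨hs, hj⟩ := h
    rw [Finset.mem_powersetCard] at hs
    rw [Finset.mem_compl] at hj
    refine ⟨Finset.mem_powersetCard.mpr ⟨by simp, ?_⟩, Finset.mem_insert_self _ _⟩
    rw [Finset.card_insert_of_notMem hj, hs.2]
  · rintro ⟨t, j⟩ h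
    rw [Finset.mem_sigma] at h ⊢
    obtain ⟨ht, hj⟩ := h
    rw [Finset.mem_powersetCard] at ht
    refine ⟨Finset.mem_powersetCard.mpr ⟨by simp, ?_⟩, by simp⟩
    rw [Finset.card_erase_of_mem hj, ht.2]
    omega
  · rintro ⟨s, j⟩ h
    rw [Finset.mem_sigma, Finset.mem_compl] at h
    simp [Finset.erase_insert h.2]
  · rintro ⟨t, j⟩ h
    rw [Finset.mem_sigma] at h
    simp [Finset.insert_erase h.2]
  · rintro ⟨s, j⟩ h
    rw [Finset.mem_sigma, Finset.mem_compl] at h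
    simp only
    rw [Finset.prod_insert h.2]
    ring

lemma esymmO_one (n : ℕ) (p : Fin n → ℝ) : esymmO n 1 p = ∑ i, p i := by
  simp [esymmO, Finset.powersetCard_one, Finset.sum_map]

/-- if `p₁,…,pₙ ∈ [0,1]` and `O_1(p) = ∑ᵢ pᵢ ≤ 1`, then for every `k ≥ 1`,
`O_k(p) ≥ 2 · O_{k+1}(p)`, strictly whenever `O_{k+1}(p) > 0`. -/
theorem esymm_ge_two_next (n : ℕ) (p : Fin n → ℝ)
    (hp : ∀ i, 0 ≤ p i ∧ p i ≤ 1)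
    (hsum : esymmO n 1 p ≤ 1) :
    ∀ k : ℕ, 1 ≤ k →
      2 * esymmO n (k + 1) p ≤ esymmO n k p ∧
      (0 < esymmO n (k + 1) p → 2 * esymmO n (k + 1) p < esymmO n k p) := by
  intro k hk
  have hsum' : ∑ i, p i ≤ 1 := by rwa [esymmO_one] at hsum
  have hprodnn : ∀ s : Finset (Fin n), 0 ≤ ∏ i ∈ s, p i :=
    fun s => Finset.prod_nonneg fun i _ => (hp i).1
  have hOnn : 0 ≤ esymmO n (k + 1) p := Finset.sum_nonneg fun s _ => hprodnn s
  set A := Finset.powersetCard k (Finset.univ : Finset (Fin n)) with hA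
  -- T : the "slack" sum
  set T : ℝ := ∑ s ∈ A, (∏ i ∈ s, p i) * ∑ j ∈ s, p j with hT
  have hTnn : 0 ≤ T :=
    Finset.sum_nonneg fun s hs => mul_nonneg (hprodnn s)
      (Finset.sum_nonneg fun j _ => (hp j).1)
  have hmain : T + (k + 1 : ℝ) * esymmO n (k + 1) p ≤ esymmO n k p := by
    rw [← esymmO_key n k p, hT, ← Finset.sum_add_distrib]
    rw [esymmO]
    apply Finset.sum_le_sum
    intro s hs
    rw [← mul_add]
    calc (∏ i ∈ s, p i) * (∑ j ∈ s, p j + ∑ j ∈ sᶜ, p j)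
        ≤ (∏ i ∈ s, p i) * 1 := by
          apply mul_le_mul_of_nonneg_left _ (hprodnn s)
          rw [Finset.sum_add_sum_compl s p]
          exact hsum'
      _ = ∏ i ∈ s, p i := mul_one _
  have h2k : (2 : ℝ) ≤ (k + 1 : ℝ) := by
    have : (1 : ℝ) ≤ (k : ℝ) := by exact_mod_cast hk
    linarith
  constructor
  · calc 2 * esymmO n (k + 1) p ≤ (k + 1 : ℝ) * esymmO n (k + 1) p :=
          mul_le_mul_of_nonneg_right h2k hOnn
      _ ≤ T + (k + 1 : ℝ) * esymmO n (k + 1) p := by linarith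
      _ ≤ esymmO n k p := hmain
  · intro hpos
    -- find t with positive product
    have : ∃ t ∈ Finset.powersetCard (k + 1) (Finset.univ : Finset (Fin n)),
        0 < ∏ i ∈ t, p i := by
      by_contra hcon
      push_neg at hcon
      have : esymmO n (k + 1) p ≤ 0 := Finset.sum_nonpos fun t ht => hcon t ht
      linarith
    obtain ⟨t, ht, htpos⟩ := this
    rw [Finset.mem_powersetCard] at ht
    have hall : ∀ i ∈ t, 0 < p i := by
      intro i hi
      rcases lt_or_eq_of_le (hp i).1 with h | h
      · exact h
      · exfalso
        rw [Finset.prod_eq_zero hi h.symm] at htpos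
        exact lt_irrefl 0 htpos
    have htne : t.Nonempty := by
      rw [← Finset.card_pos, ht.2]; omega
    obtain ⟨j, hj⟩ := htne
    set s := t.erase j with hs
    have hsA : s ∈ A := by
      rw [hA, Finset.mem_powersetCard]
      refine ⟨by simp [hs], ?_⟩
      rw [hs, Finset.card_erase_of_mem hj, ht.2]; omega
    have hsne : s.Nonempty := by
      rw [← Finset.card_pos, hs, Finset.card_erase_of_mem hj, ht.2]; omega
    have hsub : ∀ i ∈ s, 0 < p i := fun i hi => hall i (Finset.mem_of_mem_erase hi)
    have hterm : 0 < (∏ i ∈ s, p i) * ∑ j ∈ s, p j := by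
      apply mul_pos (Finset.prod_pos hsub)
      obtain ⟨i, hi⟩ := hsne
      exact Finset.sum_pos' (fun i hi => (hsub i hi).le) ⟨i, hi, hsub i hi⟩
    have hTpos : 0 < T := by
      rw [hT]
      exact Finset.sum_pos' (fun s hs => mul_nonneg (hprodnn s)
        (Finset.sum_nonneg fun j _ => (hp j).1)) ⟨s, hsA, hterm⟩
    calc 2 * esymmO n (k + 1) p ≤ (k + 1 : ℝ) * esymmO n (k + 1) p :=
          mul_le_mul_of_nonneg_right h2k hOnn
      _ < T + (k + 1 : ℝ) * esymmO n (k + 1) p := by linarith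
      _ ≤ esymmO n k p := hmain
end
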